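/- arXiv:1109.5151 — 5 statements merged into one kernel-verified Lean document; each statement's English description precedes it below -/
import Mathlib

section
/- Let r be a nonzero integer, let Δ be a positive integer, and let q be an integer. In the abelianization of the group G with presentation ⟨x, y, t ∣ t⁻¹xt = x, t⁻¹yt = yxʳ, t^Δ(xyx⁻¹y⁻¹)^q = 1⟩, the image of the generator t has order exactly Δ. -/
/-!
In the abelianization the third relator becomes `t ^ Δ = 1`, since the commutator dies, so the
order of `t` divides `Δ`. Conversely, the exponent sum of `t` modulo `Δ` is a homomorphism to
`ℤ/Δ` through which `t` maps to a generator, so `Δ` divides the order.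
-/

/-- The three generators `x`, `y`, `t`. -/
inductive Gen : Type
  | x | y | t

/-- Relators of `⟨x, y, t ∣ t⁻¹xt = x, t⁻¹yt = yxʳ, t^Δ(xyx⁻¹y⁻¹)^q = 1⟩`. -/
def fillingRels₁ (r : ℤ) (Δ : ℕ) (q : ℤ) : Set (FreeGroup Gen) :=
  { (FreeGroup.of Gen.t)⁻¹ * FreeGroup.of Gen.x * FreeGroup.of Gen.t *
      (FreeGroup.of Gen.x)⁻¹,
    (FreeGroup.of Gen.t)⁻¹ * FreeGroup.of Gen.y * FreeGroup.of Gen.t *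
      (FreeGroup.of Gen.x) ^ (-r) * (FreeGroup.of Gen.y)⁻¹,
    (FreeGroup.of Gen.t) ^ Δ *
      (FreeGroup.of Gen.x * FreeGroup.of Gen.y * (FreeGroup.of Gen.x)⁻¹ *
        (FreeGroup.of Gen.y)⁻¹) ^ q }

/-- The group `⟨x, y, t ∣ t⁻¹xt = x, t⁻¹yt = yxʳ, t^Δ(xyx⁻¹y⁻¹)^q = 1⟩`. -/
abbrev QGamma₁ (r : ℤ) (Δ : ℕ) (q : ℤ) : Type := PresentedGroup (fillingRels₁ r Δ q)

open scoped commutatorElement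

theorem Abelianization.orderOf_of_dvd_of_pow_mul_commutator_zpow_eq_one {G : Type*} [Group G]
    {t a b : G} {n : ℕ} {q : ℤ} (h : t ^ n * ⁅a, b⁆ ^ q = 1) :
    orderOf (Abelianization.of t) ∣ n := by
  have hcomm : Abelianization.of ⁅a, b⁆ = 1 := by
    rw [map_commutatorElement, commutatorElement_eq_one_iff_commute]
    exact Commute.all _ _
  apply orderOf_dvd_of_pow_eq_one
  simpa [hcomm] using congrArg Abelianization.of h

theorem QGamma₁.t_pow_mul_commutator_zpow_eq_one (r : ℤ) (Δ : ℕ) (q : ℤ) :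
    (PresentedGroup.of Gen.t : QGamma₁ r Δ q) ^ Δ *
      ⁅(PresentedGroup.of Gen.x : QGamma₁ r Δ q), PresentedGroup.of Gen.y⁆ ^ q = 1 := by
  simpa [commutatorElement_def, PresentedGroup.of] using
    PresentedGroup.one_of_mem (rels := fillingRels₁ r Δ q) (Or.inr (Or.inr rfl))

/-- The exponent sum of `t` modulo `Δ`; it is well defined since every relator has `t`-exponent
sum `0` or `Δ`. -/
def QGamma₁.tExponentMod (r : ℤ) (Δ : ℕ) (q : ℤ) : QGamma₁ r Δ q →* Multiplicative (ZMod Δ) :=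
  PresentedGroup.toGroup (f := fun | Gen.t => Multiplicative.ofAdd 1 | _ => 1) <| by
    rintro w (rfl | rfl | rfl) <;> simp [← ofAdd_nsmul]

theorem QGamma₁.tExponentMod_t (r : ℤ) (Δ : ℕ) (q : ℤ) :
    tExponentMod r Δ q (PresentedGroup.of Gen.t) = Multiplicative.ofAdd 1 :=
  PresentedGroup.toGroup.of _

theorem orderOf_t_in_abelianization_general
    (r : ℤ) (Δ : ℕ) (q : ℤ) :
    orderOf (Abelianization.of (PresentedGroup.of Gen.t : QGamma₁ r Δ q)) = Δ := by
  apply Nat.dvd_antisymm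
  · exact Abelianization.orderOf_of_dvd_of_pow_mul_commutator_zpow_eq_one
      (QGamma₁.t_pow_mul_commutator_zpow_eq_one r Δ q)
  · have h := orderOf_map_dvd (Abelianization.lift (QGamma₁.tExponentMod r Δ q))
      (Abelianization.of (PresentedGroup.of Gen.t))
    rwa [Abelianization.lift_apply_of, QGamma₁.tExponentMod_t, orderOf_ofAdd_eq_addOrderOf,
      ZMod.addOrderOf_one] at h

/-- If `r ≠ 0` and `Δ > 0`, then in the abelianization of
`⟨x, y, t ∣ t⁻¹xt = x, t⁻¹yt = yxʳ, t^Δ(xyx⁻¹y⁻¹)^q = 1⟩` the image of the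
generator `t` has order exactly `Δ`. -/
theorem orderOf_t_in_abelianization
    (r : ℤ) (hr : r ≠ 0) (Δ : ℕ) (hΔ : 0 < Δ) (q : ℤ) :
    orderOf (Abelianization.of (PresentedGroup.of Gen.t : QGamma₁ r Δ q)) = Δ :=
  orderOf_t_in_abelianization_general r Δ q
end

section
/- Let K be the Klein bottle group, the group with presentation ⟨y, s ∣ s⁻¹ys = y⁻¹⟩. If A and B are nontrivial groups and there exists a surjective group homomorphism from K onto the free product A ∗ B, then A ∗ B is isomorphic to the free product (ℤ/2ℤ) ∗ (ℤ/2ℤ). -/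
/-!
In the Klein bottle group `s⁻¹ y s = y⁻¹`, so `⟨y⟩` is a normal cyclic subgroup with cyclic
quotient generated by the image of `s`; hence the Klein bottle group, and every quotient of it,
is metabelian. In `A ∗ B`, for `x, x' ∈ A` and `y ∈ B` all nontrivial, the commutators `[x, y]` and
`[x', y]` commute only if the reduced words `[x, y][x', y]` and `[x', y][x, y]` coincide, which
forces `x = x'`. So `A` and, symmetrically, `B` have exactly one nontrivial element.
-/

/-- The two generators `y`, `s` of the Klein bottle group. -/
inductive KGen : Type
  | y | s

/-- The single relator `s⁻¹ysy` of the Klein bottle group `⟨y, s ∣ s⁻¹ys = y⁻¹⟩`. -/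
def kleinRels : Set (FreeGroup KGen) :=
  { (FreeGroup.of KGen.s)⁻¹ * FreeGroup.of KGen.y * FreeGroup.of KGen.s *
      FreeGroup.of KGen.y }

/-- The Klein bottle group `⟨y, s ∣ s⁻¹ys = y⁻¹⟩`. -/
abbrev KleinBottleGroup : Type := PresentedGroup kleinRels

open Monoid Subgroup
open scoped commutatorElement

section Metabelian

variable {G H : Type*} [Group G] [Group H]

theorem mem_normalizer_zpowers_of_inv_mul_mul_eq_inv {g a : G} (h : g⁻¹ * a * g = a⁻¹) :
    g ∈ normalizer (zpowers a : Set G) := by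
  refine inv_mem_iff.mp (mem_normalizer_iff_map_conj_eq.mpr ?_)
  rw [MonoidHom.map_zpowers]
  simp [h]

theorem derivedSeries_two_eq_bot_of_sup_eq_top {N K : Subgroup G} [N.Normal]
    [IsMulCommutative N] [IsMulCommutative K] (h : N ⊔ K = ⊤) : derivedSeries G 2 = ⊥ := by
  have hle : commutator G ≤ N :=
    Normal.commutator_le_of_self_sup_commutative_eq_top h inferInstance
  rw [eq_bot_iff, derivedSeries_succ, derivedSeries_one,
    ← commutator_self_eq_bot_iff.mpr (inferInstance : IsMulCommutative N)]
  exact commutator_mono hle hle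

theorem derivedSeries_eq_bot_of_surjective {f : G →* H} (hf : Function.Surjective f) {n : ℕ}
    (h : derivedSeries G n = ⊥) : derivedSeries H n = ⊥ := by
  rw [← map_derivedSeries_eq hf, h, Subgroup.map_bot]

theorem commute_commutatorElement_of_derivedSeries_two_eq_bot (h : derivedSeries G 2 = ⊥)
    (g₁ g₂ g₃ g₄ : G) : Commute ⁅g₁, g₂⁆ ⁅g₃, g₄⁆ := by
  have hmem : ⁅⁅g₁, g₂⁆, ⁅g₃, g₄⁆⁆ ∈ derivedSeries G 2 :=
    commutator_mem_commutator (commutator_mem_commutator (mem_top g₁) (mem_top g₂))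
      (commutator_mem_commutator (mem_top g₃) (mem_top g₄))
  rw [h, mem_bot] at hmem
  exact commutatorElement_eq_one_iff_commute.mp hmem

end Metabelian

namespace KleinBottleGroup

theorem of_s_inv_mul_of_y_mul_of_s :
    (PresentedGroup.of KGen.s : KleinBottleGroup)⁻¹ * .of .y * .of .s = (.of .y)⁻¹ :=
  eq_inv_of_mul_eq_one_left (PresentedGroup.one_of_mem (rels := kleinRels) rfl)

instance zpowers_of_y_normal : (zpowers (PresentedGroup.of KGen.y : KleinBottleGroup)).Normal := by
  refine normalizer_eq_top_iff.mp (eq_top_iff.mpr fun g _ ↦ PresentedGroup.generated_by _ _ ?_ g)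
  rintro (_ | _)
  · exact le_normalizer (mem_zpowers _)
  · exact mem_normalizer_zpowers_of_inv_mul_mul_eq_inv of_s_inv_mul_of_y_mul_of_s

theorem zpowers_of_y_sup_zpowers_of_s :
    zpowers (PresentedGroup.of KGen.y : KleinBottleGroup) ⊔ zpowers (.of .s) = ⊤ := by
  refine eq_top_iff.mpr fun g _ ↦ PresentedGroup.generated_by _ _ ?_ g
  rintro (_ | _)
  · exact mem_sup_left (mem_zpowers _)
  · exact mem_sup_right (mem_zpowers _)

theorem derivedSeries_two_eq_bot : derivedSeries KleinBottleGroup 2 = ⊥ :=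
  derivedSeries_two_eq_bot_of_sup_eq_top zpowers_of_y_sup_zpowers_of_s

end KleinBottleGroup

namespace Monoid.CoprodI

namespace NeWord

theorem head_eq_of_prod_eq {ι : Type*} {M : ι → Type*} [∀ i, Monoid (M i)] {i j : ι}
    {w w' : NeWord M i j} (h : w.prod = w'.prod) : w.head = w'.head := by
  classical
  have hword : w.toWord = w'.toWord := Word.equiv.symm.injective h
  simpa [toWord] using congrArg (fun v : Word M ↦ v.toList.head?) hword

variable {ι : Type*} {G : ι → Type*} [∀ i, Group (G i)] {i j : ι}

def commutator (hij : i ≠ j) {x : G i} {y : G j} (hx : x ≠ 1) (hy : y ≠ 1) : NeWord G i j :=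
  append (append (singleton x hx) hij (singleton y hy)) hij.symm
    (append (singleton x⁻¹ (inv_ne_one.mpr hx)) hij (singleton y⁻¹ (inv_ne_one.mpr hy)))

theorem prod_commutator (hij : i ≠ j) {x : G i} {y : G j} (hx : x ≠ 1) (hy : y ≠ 1) :
    (commutator hij hx hy).prod = ⁅of x, of y⁆ := by
  simp [commutator, commutatorElement_def, mul_assoc]

end NeWord

theorem eq_of_commute_commutatorElement {ι : Type*} {G : ι → Type*} [∀ i, Group (G i)]
    {i j : ι} (hij : i ≠ j) {x x' : G i} {y : G j} (hx : x ≠ 1) (hx' : x' ≠ 1) (hy : y ≠ 1)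
    (h : Commute ⁅of x, of y⁆ ⁅of x', of y⁆) : x = x' := by
  let w := NeWord.append (NeWord.commutator hij hx hy) hij.symm (NeWord.commutator hij hx' hy)
  let w' := NeWord.append (NeWord.commutator hij hx' hy) hij.symm (NeWord.commutator hij hx hy)
  have hprod : w.prod = w'.prod := by simpa [w, w', NeWord.prod_commutator] using h.eq
  simpa [w, w', NeWord.commutator] using NeWord.head_eq_of_prod_eq hprod

end Monoid.CoprodI

namespace Monoid.Coprod

universe u v

variable {A : Type u} {B : Type v} [Group A] [Group B]

/-- `CoprodI` needs all factors in one universe, hence the `ULift`s. -/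
abbrev boolFamily (A : Type u) (B : Type v) : Bool → Type (max u v) :=
  fun b ↦ bif b then ULift.{v} A else ULift.{u} B

instance (b : Bool) : Group (boolFamily A B b) := by
  cases b <;> dsimp [boolFamily] <;> infer_instance

def toCoprodI : A ∗ B →* CoprodI (boolFamily A B) :=
  lift ((CoprodI.of (i := true)).comp MulEquiv.ulift.symm.toMonoidHom)
    ((CoprodI.of (i := false)).comp MulEquiv.ulift.symm.toMonoidHom)

theorem eq_of_commute_commutatorElement {x x' : A} {y : B} (hx : x ≠ 1) (hx' : x' ≠ 1)
    (hy : y ≠ 1)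
    (h : Commute ⁅(inl x : A ∗ B), (inr y : A ∗ B)⁆ ⁅(inl x' : A ∗ B), (inr y : A ∗ B)⁆) :
    x = x' := by
  have h' := h.map toCoprodI
  simp only [map_commutatorElement] at h'
  exact ULift.up_injective <| CoprodI.eq_of_commute_commutatorElement (G := boolFamily A B)
    (by decide) (ULift.up_injective.ne hx) (ULift.up_injective.ne hx')
    (ULift.up_injective.ne hy) h'

theorem card_eq_two_of_derivedSeries_two_eq_bot [Nontrivial A] [Nontrivial B]
    (h : derivedSeries (A ∗ B) 2 = ⊥) : Nat.card A = 2 := by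
  obtain ⟨x₀, hx₀⟩ := exists_ne (1 : A)
  obtain ⟨y, hy⟩ := exists_ne (1 : B)
  refine (Nat.card_eq_two_iff' 1).mpr ⟨x₀, hx₀, fun x hx ↦ ?_⟩
  exact eq_of_commute_commutatorElement hx hx₀ hy
    (commute_commutatorElement_of_derivedSeries_two_eq_bot h _ _ _ _)

end Monoid.Coprod

/-- If `A` and `B` are nontrivial groups and there is a surjective homomorphism from
the Klein bottle group `⟨y, s ∣ s⁻¹ys = y⁻¹⟩` onto the free product `A ∗ B`, then
`A ∗ B ≅ (ℤ/2ℤ) ∗ (ℤ/2ℤ)`. -/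
theorem free_product_quotient_of_klein_bottle_group
    {A B : Type*} [Group A] [Group B] [Nontrivial A] [Nontrivial B]
    (φ : KleinBottleGroup →* Monoid.Coprod A B) (hφ : Function.Surjective φ) :
    Nonempty (Monoid.Coprod A B ≃*
      Monoid.Coprod (Multiplicative (ZMod 2)) (Multiplicative (ZMod 2))) := by
  have hAB : derivedSeries (Coprod A B) 2 = ⊥ :=
    derivedSeries_eq_bot_of_surjective hφ KleinBottleGroup.derivedSeries_two_eq_bot
  have hBA : derivedSeries (Coprod B A) 2 = ⊥ :=
    derivedSeries_eq_bot_of_surjective Coprod.swap_surjective hAB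
  have hZ : Nat.card (Multiplicative (ZMod 2)) = 2 := by simp
  exact ⟨MulEquiv.coprodCongr
    (mulEquivOfPrimeCardEq (Coprod.card_eq_two_of_derivedSeries_two_eq_bot hAB) hZ)
    (mulEquivOfPrimeCardEq (Coprod.card_eq_two_of_derivedSeries_two_eq_bot hBA) hZ)⟩
end

section
/- In the free product F = (ℤ/3ℤ) ∗ (ℤ/2ℤ), let a be the image of a generator of ℤ/3ℤ and b the image of the generator of ℤ/2ℤ. Then the element a²bab is not a proper power: there is no g ∈ F and no integer n ≥ 2 with gⁿ = a²bab. -/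
/-!
Map `F = (ℤ/3ℤ) ∗ (ℤ/2ℤ)` to `PSL(2, ℤ)` by `a ↦ ±ST`, `b ↦ ±S`; then `a²bab` lifts to a matrix of
trace `±3`. For `M ∈ SL(2, ℤ)` with trace `t`, Cayley–Hamilton gives `Mⁿ⁺¹ = Sₙ(t) M - Sₙ₋₁(t)` with
`Sₙ` the Chebyshev polynomials, so `disc(Mⁿ⁺¹) = Sₙ(t)² disc(M)`, i.e.
`tr(Mⁿ⁺¹)² - 4 = Sₙ(t)² (t² - 4)`. A trace of `±3` makes the left side `5`, which forces `|t| ≥ 3`;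
but then `|Sₙ(t)| ≥ n + 1 ≥ 2` for `n ≥ 1`, and the right side is at least `20`.
-/

/-- The free product `(ℤ/3ℤ) ∗ (ℤ/2ℤ)`. -/
abbrev Z3starZ2 : Type :=
  Monoid.Coprod (Multiplicative (ZMod 3)) (Multiplicative (ZMod 2))

open Polynomial

namespace Polynomial.Chebyshev

variable {R : Type*} [CommRing R] [LinearOrder R] [IsStrictOrderedRing R] {t : R}

lemma abs_eval_S_add_one_le_abs_eval_S_succ (ht : 2 ≤ |t|) (n : ℕ) :
    |(S R n).eval t| + 1 ≤ |(S R (n + 1)).eval t| := by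
  induction n with
  | zero =>
    simp only [CharP.cast_eq_zero, S_zero, eval_one, abs_one, zero_add, S_one, eval_X]
    linarith
  | succ n ih =>
    have hrec : (S R (n + 1 + 1)).eval t = t * (S R (n + 1)).eval t - (S R n).eval t := by
      simp [S_add_two, add_assoc, one_add_one_eq_two]
    push_cast at ih ⊢
    calc |(S R (n + 1)).eval t| + 1
        ≤ 2 * |(S R (n + 1)).eval t| - |(S R n).eval t| := by linarith
      _ ≤ |t| * |(S R (n + 1)).eval t| - |(S R n).eval t| := by gcongr
      _ ≤ |(S R (n + 1 + 1)).eval t| := by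
        rw [hrec, ← abs_mul]; exact abs_sub_abs_le_abs_sub _ _

lemma le_abs_eval_S (ht : 2 ≤ |t|) (n : ℕ) : (n + 1 : R) ≤ |(S R n).eval t| := by
  induction n with
  | zero => simp
  | succ n ih => push_cast; linarith [abs_eval_S_add_one_le_abs_eval_S_succ ht n]

end Polynomial.Chebyshev

namespace Matrix

open Polynomial.Chebyshev

variable {R : Type*} [CommRing R]

lemma sq_eq_trace_smul_sub_det_smul (M : Matrix (Fin 2) (Fin 2) R) :
    M ^ 2 = M.trace • M - M.det • 1 := by
  nontriviality R
  have h := M.aeval_self_charpoly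
  rw [charpoly_fin_two] at h
  simp only [map_add, map_sub, map_pow, aeval_X, map_mul, Polynomial.aeval_C,
    Algebra.algebraMap_eq_smul_one, smul_mul_assoc, one_mul] at h
  rw [← sub_eq_zero, ← h]
  abel

lemma pow_succ_eq_eval_S_smul_sub (M : Matrix (Fin 2) (Fin 2) R) (hM : M.det = 1) (n : ℕ) :
    M ^ (n + 1) = (S R n).eval M.trace • M - (S R (n - 1)).eval M.trace • 1 := by
  induction n with
  | zero => simp
  | succ n ih =>
    rw [pow_succ, ih, sub_mul, smul_mul_assoc, smul_mul_assoc, one_mul, ← sq,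
      sq_eq_trace_smul_sub_det_smul, hM]
    push_cast
    rw [S_add_one, add_sub_cancel_right, eval_sub, eval_mul, eval_X]
    module

lemma discr_smul_sub_smul_one (M : Matrix (Fin 2) (Fin 2) R) (u v : R) :
    (u • M - v • 1).discr = u ^ 2 * M.discr := by
  simp [discr_fin_two, trace_fin_two, det_fin_two, one_fin_two]
  ring

lemma discr_pow_succ (M : Matrix (Fin 2) (Fin 2) R) (hM : M.det = 1) (n : ℕ) :
    (M ^ (n + 1)).discr = (S R n).eval M.trace ^ 2 * M.discr := by
  rw [pow_succ_eq_eval_S_smul_sub M hM, discr_smul_sub_smul_one]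

lemma trace_pow_sq_ne_nine {M : Matrix (Fin 2) (Fin 2) ℤ} (hM : M.det = 1) {n : ℕ} (hn : 2 ≤ n) :
    (M ^ n).trace ^ 2 ≠ 9 := by
  intro h9
  obtain ⟨m, rfl⟩ : ∃ m, n = m + 1 := ⟨n - 1, by omega⟩
  have h5 : 5 = (S ℤ m).eval M.trace ^ 2 * (M.trace ^ 2 - 4) := by
    have hdiscr := discr_pow_succ M hM m
    rw [discr_fin_two, discr_fin_two, det_pow, hM, h9, one_pow, mul_one] at hdiscr
    linarith
  set t := M.trace
  set s := (S ℤ m).eval t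
  rcases le_or_gt (t ^ 2) 4 with ht | ht
  · nlinarith [sq_nonneg s]
  · have ht3 : 3 ≤ |t| := by nlinarith [sq_abs t, abs_nonneg t]
    have hs : 2 ≤ |s| := by
      have : (m + 1 : ℤ) ≤ |s| := le_abs_eval_S (by linarith) m
      omega
    have ht9 : 9 ≤ t ^ 2 := by nlinarith [sq_abs t]
    have hs4 : 4 ≤ s ^ 2 := by nlinarith [sq_abs s]
    nlinarith

lemma SpecialLinearGroup.trace_pow_card_eq_of_coe_eq {n : Type*} [Fintype n] [DecidableEq n]
    {A B : SpecialLinearGroup n R} (h : (A : ProjectiveSpecialLinearGroup n R) = B) :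
    (A : Matrix n n R).trace ^ Fintype.card n = (B : Matrix n n R).trace ^ Fintype.card n := by
  obtain ⟨r, hr, hAB⟩ := SpecialLinearGroup.mem_center_iff.mp (QuotientGroup.eq.mp h)
  have hB : (B : Matrix n n R) = r • (A : Matrix n n R) :=
    calc (B : Matrix n n R) = ((A * (A⁻¹ * B) : SpecialLinearGroup n R) : Matrix n n R) := by
          rw [mul_inv_cancel_left]
      _ = r • (A : Matrix n n R) := by
          rw [SpecialLinearGroup.coe_mul, ← hAB, scalar_apply, smul_eq_mul_diagonal]
  rw [hB, trace_smul, smul_eq_mul, mul_pow, hr, one_mul]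

end Matrix

def zmodPowersHom (n : ℕ) {G : Type*} [Group G] (x : G) (hx : x ^ n = 1) :
    Multiplicative (ZMod n) →* G :=
  AddMonoidHom.toMultiplicativeLeft
    (ZMod.lift n ⟨zmultiplesHom (Additive G) (Additive.ofMul x), by simpa [← ofMul_pow]⟩)

lemma zmodPowersHom_ofAdd {n : ℕ} [NeZero n] {G : Type*} [Group G] {x : G} (hx : x ^ n = 1)
    (k : ZMod n) : zmodPowersHom n x hx (Multiplicative.ofAdd k) = x ^ k.val := by
  rw [← ZMod.natCast_zmod_val k, ← Int.cast_natCast]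
  show Additive.toMul (ZMod.lift n _ ((k.val : ℤ) : ZMod n)) = _
  rw [ZMod.lift_coe]
  simp [-ZMod.natCast_val, Nat.mod_eq_of_lt (ZMod.val_lt k)]

open MatrixGroups ModularGroup

lemma Matrix.SpecialLinearGroup.coe_neg_one_eq_one {R : Type*} [CommRing R] :
    ((-1 : SL(2, R)) : PSL(2, R)) = 1 :=
  (QuotientGroup.eq_one_iff _).mpr (Subgroup.mem_center_iff.mpr fun g ↦ by simp)

lemma ModularGroup.S_sq : S ^ 2 = -1 := by
  ext i j; fin_cases i <;> fin_cases j <;> rfl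

lemma ModularGroup.S_mul_T_pow_three : (S * T) ^ 3 = -1 := by
  ext i j; fin_cases i <;> fin_cases j <;> rfl

def Z3starZ2.toPSL : Z3starZ2 →* PSL(2, ℤ) :=
  Monoid.Coprod.lift
    (zmodPowersHom 3 ((S * T : SL(2, ℤ)) : PSL(2, ℤ)) (by
      rw [← QuotientGroup.mk_pow, S_mul_T_pow_three, Matrix.SpecialLinearGroup.coe_neg_one_eq_one]))
    (zmodPowersHom 2 ((S : SL(2, ℤ)) : PSL(2, ℤ)) (by
      rw [← QuotientGroup.mk_pow, S_sq, Matrix.SpecialLinearGroup.coe_neg_one_eq_one]))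

lemma Z3starZ2.toPSL_inl (k : ZMod 3) :
    toPSL (Monoid.Coprod.inl (.ofAdd k)) = (((S * T) ^ k.val : SL(2, ℤ)) : PSL(2, ℤ)) := by
  simp [toPSL, zmodPowersHom_ofAdd, QuotientGroup.mk_pow]

lemma Z3starZ2.toPSL_inr (k : ZMod 2) :
    toPSL (Monoid.Coprod.inr (.ofAdd k)) = ((S ^ k.val : SL(2, ℤ)) : PSL(2, ℤ)) := by
  simp [toPSL, zmodPowersHom_ofAdd, QuotientGroup.mk_pow]

lemma Z3starZ2.trace_sq_lift_a_sq_b_a_b (k : ZMod 3) (hk : k ≠ 0) :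
    ((((S * T) ^ k.val) ^ 2 * S * (S * T) ^ k.val * S : SL(2, ℤ)) :
      Matrix (Fin 2) (Fin 2) ℤ).trace ^ 2 = 9 := by
  revert k; decide

/-- In `F = (ℤ/3ℤ) ∗ (ℤ/2ℤ)`, with `a` the image of a generator of `ℤ/3ℤ` and `b` the
image of the generator of `ℤ/2ℤ`, the element `a²bab` is not a proper power: there is
no `g ∈ F` and no integer `n ≥ 2` with `gⁿ = a²bab`. -/
theorem a_sq_b_a_b_not_proper_power
    (a₀ : Multiplicative (ZMod 3)) (ha₀ : Subgroup.zpowers a₀ = ⊤) :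
    ¬ ∃ (g : Z3starZ2) (n : ℤ), 2 ≤ n ∧
      g ^ n = (Monoid.Coprod.inl a₀) ^ 2 *
        Monoid.Coprod.inr (Multiplicative.ofAdd (1 : ZMod 2)) *
        Monoid.Coprod.inl a₀ *
        Monoid.Coprod.inr (Multiplicative.ofAdd (1 : ZMod 2)) := by
  rintro ⟨g, n, hn, hg⟩
  lift n to ℕ using (by omega)
  have hk : a₀.toAdd ≠ 0 := by
    intro h
    simp [show a₀ = 1 from h] at ha₀
  obtain ⟨M, hM⟩ := QuotientGroup.mk_surjective (Z3starZ2.toPSL g)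
  have hMn := congrArg Z3starZ2.toPSL hg
  rw [zpow_natCast, map_pow, ← hM, ← QuotientGroup.mk_pow, map_mul, map_mul, map_mul, map_pow,
    ← ofAdd_toAdd a₀, Z3starZ2.toPSL_inl, Z3starZ2.toPSL_inr] at hMn
  simp only [← QuotientGroup.mk_pow, ← QuotientGroup.mk_mul, ZMod.val_one, pow_one] at hMn
  have htrace := Matrix.SpecialLinearGroup.trace_pow_card_eq_of_coe_eq hMn
  rw [Fintype.card_fin, Z3starZ2.trace_sq_lift_a_sq_b_a_b _ hk,
    Matrix.SpecialLinearGroup.coe_pow] at htrace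
  exact Matrix.trace_pow_sq_ne_nine M.2 (by omega) htrace
end

section
/- Let r be an integer and let G₂(r) be the group with presentation ⟨x, y, t ∣ t⁻¹xt = (xy)x⁻¹(xy)⁻¹, t⁻¹yt = x(x⁻ʳy⁻¹)x⁻¹⟩. Setting s := t·x·y in G₂(r), the following identities hold: s⁻¹xs = x⁻¹, s⁻¹ys = y⁻¹x⁻ʳ, and s⁻²ys² = xʳyxʳ. -/
/-- Relators of `G₂(r) = ⟨x, y, t ∣ t⁻¹xt = (xy)x⁻¹(xy)⁻¹, t⁻¹yt = x(x⁻ʳy⁻¹)x⁻¹⟩`. -/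
def rels₂ (r : ℤ) : Set (FreeGroup Gen) :=
  { (FreeGroup.of Gen.t)⁻¹ * FreeGroup.of Gen.x * FreeGroup.of Gen.t *
      ((FreeGroup.of Gen.x * FreeGroup.of Gen.y) * (FreeGroup.of Gen.x)⁻¹ *
        (FreeGroup.of Gen.x * FreeGroup.of Gen.y)⁻¹)⁻¹,
    (FreeGroup.of Gen.t)⁻¹ * FreeGroup.of Gen.y * FreeGroup.of Gen.t *
      (FreeGroup.of Gen.x * ((FreeGroup.of Gen.x) ^ (-r) * (FreeGroup.of Gen.y)⁻¹) *
        (FreeGroup.of Gen.x)⁻¹)⁻¹ }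

/-- `G₂(r) = ⟨x, y, t ∣ t⁻¹xt = (xy)x⁻¹(xy)⁻¹, t⁻¹yt = x(x⁻ʳy⁻¹)x⁻¹⟩`. -/
abbrev G₂ (r : ℤ) : Type := PresentedGroup (rels₂ r)

/-- In `G₂(r)`, setting `s := t·x·y`, one has `s⁻¹xs = x⁻¹`, `s⁻¹ys = y⁻¹x⁻ʳ`, and
`s⁻²ys² = xʳyxʳ`. -/
theorem s_conjugation_identities_in_G₂ (r : ℤ) :
    let x : G₂ r := PresentedGroup.of Gen.x
    let y : G₂ r := PresentedGroup.of Gen.y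
    let t : G₂ r := PresentedGroup.of Gen.t
    let s : G₂ r := t * x * y
    s⁻¹ * x * s = x⁻¹ ∧
      s⁻¹ * y * s = y⁻¹ * x ^ (-r) ∧
      s⁻¹ * s⁻¹ * y * s * s = x ^ r * y * x ^ r := by
  intro x y t s
  have hs : s = t * x * y := rfl
  have rel : ∀ w ∈ rels₂ r,
      (QuotientGroup.mk' (Subgroup.normalClosure (rels₂ r))) w = 1 := fun w hw =>
    (QuotientGroup.eq_one_iff w).2 (Subgroup.subset_normalClosure hw)
  have h1 := rel _ (Set.mem_insert _ _)
  have h2 := rel _ (Set.mem_insert_of_mem _ rfl)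
  have hfx : (QuotientGroup.mk' (Subgroup.normalClosure (rels₂ r))) (FreeGroup.of Gen.x) = x :=
    rfl
  have hfy : (QuotientGroup.mk' (Subgroup.normalClosure (rels₂ r))) (FreeGroup.of Gen.y) = y :=
    rfl
  have hft : (QuotientGroup.mk' (Subgroup.normalClosure (rels₂ r))) (FreeGroup.of Gen.t) = t :=
    rfl
  simp only [map_mul, map_inv, map_zpow, hfx, hfy, hft] at h1 h2
  have hc1 : t⁻¹ * x * t = x * y * x⁻¹ * (x * y)⁻¹ := mul_inv_eq_one.mp h1
  have hc2 : t⁻¹ * y * t = x * (x ^ (-r) * y⁻¹) * x⁻¹ := mul_inv_eq_one.mp h2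
  have e1 : s⁻¹ * x * s = x⁻¹ := by
    rw [hs]
    calc (t * x * y)⁻¹ * x * (t * x * y) = y⁻¹ * x⁻¹ * (t⁻¹ * x * t) * x * y := by group
      _ = x⁻¹ := by rw [hc1]; group
  have e2 : s⁻¹ * y * s = y⁻¹ * x ^ (-r) := by
    rw [hs]
    calc (t * x * y)⁻¹ * y * (t * x * y) = y⁻¹ * x⁻¹ * (t⁻¹ * y * t) * x * y := by group
      _ = y⁻¹ * x ^ (-r) := by rw [hc2]; group
  refine ⟨e1, e2, ?_⟩
  have e1' : s⁻¹ * x ^ (-r) * s = x ^ r := by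
    have h : (s⁻¹ * x * s) ^ (-r) = s⁻¹ * x ^ (-r) * s := by
      simpa using conj_zpow (i := -r) (a := s⁻¹) (b := x)
    rw [← h, e1]; group
  have e2' : s⁻¹ * y⁻¹ * s = x ^ r * y := by
    have h : s⁻¹ * y⁻¹ * s = (s⁻¹ * y * s)⁻¹ := by group
    rw [h, e2]; group
  calc s⁻¹ * s⁻¹ * y * s * s = s⁻¹ * (s⁻¹ * y * s) * s := by group
    _ = s⁻¹ * (y⁻¹ * x ^ (-r)) * s := by rw [e2]
    _ = (s⁻¹ * y⁻¹ * s) * (s⁻¹ * x ^ (-r) * s) := by group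
    _ = x ^ r * y * x ^ r := by rw [e1', e2']
end

section
/- The group with presentation ⟨x₂, x₄, s, t ∣ tx₄x₂ = 1, x₂x₄t⁻¹x₂st = 1, x₂x₄²t⁻¹ = 1⟩ is isomorphic to the group with presentation ⟨a, b ∣ a²b³ = 1⟩, via an isomorphism sending x₂ ↦ a and x₄ ↦ b. -/
/-- The four generators `x₂`, `x₄`, `s`, `t` of the first group. -/
inductive GenMW : Type
  | x₂ | x₄ | s | t

/-- The two generators `a`, `b` of `⟨a, b ∣ a²b³ = 1⟩`. -/
inductive GenT : Type
  | a | b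

/-- Relators `tx₄x₂`, `x₂x₄t⁻¹x₂st`, `x₂x₄²t⁻¹` of
`⟨x₂, x₄, s, t ∣ tx₄x₂ = 1, x₂x₄t⁻¹x₂st = 1, x₂x₄²t⁻¹ = 1⟩`. -/
def relsMW : Set (FreeGroup GenMW) :=
  { FreeGroup.of GenMW.t * FreeGroup.of GenMW.x₄ * FreeGroup.of GenMW.x₂,
    FreeGroup.of GenMW.x₂ * FreeGroup.of GenMW.x₄ * (FreeGroup.of GenMW.t)⁻¹ *
      FreeGroup.of GenMW.x₂ * FreeGroup.of GenMW.s * FreeGroup.of GenMW.t,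
    FreeGroup.of GenMW.x₂ * (FreeGroup.of GenMW.x₄) ^ 2 * (FreeGroup.of GenMW.t)⁻¹ }

/-- The single relator `a²b³` of `⟨a, b ∣ a²b³ = 1⟩`. -/
def relsT : Set (FreeGroup GenT) :=
  { (FreeGroup.of GenT.a) ^ 2 * (FreeGroup.of GenT.b) ^ 3 }

/-!
Eliminating generators: the first relator gives `t = x₂⁻¹x₄⁻¹` and the second then expresses
`s` in `x₂, x₄`. Substituting into the third relator leaves `x₂x₄³x₂`, a conjugate of `x₂²x₄³`,
so the first group is `⟨x₂, x₄ ∣ x₂²x₄³ = 1⟩`.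
-/

open PresentedGroup GenMW GenT

lemma of_a_sq_mul_of_b_cube : (of a : PresentedGroup relsT) ^ 2 * of b ^ 3 = 1 :=
  one_of_mem (Set.mem_singleton _)

namespace MW

lemma relator₁ : (of t : PresentedGroup relsMW) * of x₄ * of x₂ = 1 :=
  one_of_mem (by simp [relsMW])

lemma relator₂ : (of x₂ : PresentedGroup relsMW) * of x₄ * (of t)⁻¹ * of x₂ * of s * of t = 1 :=
  one_of_mem (by simp [relsMW])

lemma relator₃ : (of x₂ : PresentedGroup relsMW) * of x₄ ^ 2 * (of t)⁻¹ = 1 :=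
  one_of_mem (by simp [relsMW])

lemma of_t_eq : (of t : PresentedGroup relsMW) = (of x₂)⁻¹ * (of x₄)⁻¹ := by
  rw [← mul_inv_rev, eq_inv_iff_mul_eq_one, ← mul_assoc, relator₁]

lemma of_s_eq : (of s : PresentedGroup relsMW) =
    (of x₂)⁻¹ * of t * (of x₄)⁻¹ * (of x₂)⁻¹ * (of t)⁻¹ := by
  calc (of s : PresentedGroup relsMW)
      = (of x₂ * of x₄ * (of t)⁻¹ * of x₂)⁻¹ *
          (of x₂ * of x₄ * (of t)⁻¹ * of x₂ * of s * of t) * (of t)⁻¹ := by group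
    _ = _ := by rw [relator₂]; group

lemma of_x₂_sq_mul_of_x₄_cube : (of x₂ : PresentedGroup relsMW) ^ 2 * of x₄ ^ 3 = 1 := by
  have h : (of x₂ : PresentedGroup relsMW) * of x₄ ^ 3 * of x₂ = 1 := by
    rw [← relator₃, of_t_eq]; group
  calc (of x₂ : PresentedGroup relsMW) ^ 2 * of x₄ ^ 3
      = of x₂ * (of x₂ * of x₄ ^ 3 * of x₂) * (of x₂)⁻¹ := by rw [sq]; group
    _ = 1 := by rw [h]; group

end MW

/-- Solving the relators of `relsMW` for `t` and `s`. -/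
def genMWToT : GenMW → PresentedGroup relsT
  | x₂ => of a
  | x₄ => of b
  | t => (of a)⁻¹ * (of b)⁻¹
  | s => (of a)⁻¹ ^ 2 * (of b)⁻¹ ^ 2 * (of a)⁻¹ * of b * of a

lemma lift_genMWToT_relator {r : FreeGroup GenMW} (hr : r ∈ relsMW) :
    FreeGroup.lift genMWToT r = 1 := by
  rcases hr with rfl | rfl | rfl <;>
    simp only [map_mul, map_inv, map_pow, FreeGroup.lift_apply_of, genMWToT]
  · group
  · group
  · calc (of a : PresentedGroup relsT) * of b ^ 2 * ((of a)⁻¹ * (of b)⁻¹)⁻¹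
        = (of a)⁻¹ * (of a ^ 2 * of b ^ 3) * of a := by group
      _ = 1 := by rw [of_a_sq_mul_of_b_cube]; group

def genTToMW : GenT → PresentedGroup relsMW
  | a => of x₂
  | b => of x₄

lemma lift_genTToMW_relator {r : FreeGroup GenT} (hr : r ∈ relsT) :
    FreeGroup.lift genTToMW r = 1 := by
  rw [Set.mem_singleton_iff.mp hr]
  simpa only [map_mul, map_pow, FreeGroup.lift_apply_of, genTToMW]
    using MW.of_x₂_sq_mul_of_x₄_cube

def mwToT : PresentedGroup relsMW →* PresentedGroup relsT :=
  toGroup fun _ ↦ lift_genMWToT_relator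

def tToMW : PresentedGroup relsT →* PresentedGroup relsMW :=
  toGroup fun _ ↦ lift_genTToMW_relator

lemma tToMW_comp_mwToT : tToMW.comp mwToT = MonoidHom.id _ := by
  refine PresentedGroup.ext fun g ↦ ?_
  cases g <;> simp only [MonoidHom.comp_apply, MonoidHom.id_apply, mwToT, tToMW, toGroup.of,
    genMWToT, genTToMW, map_mul, map_inv, map_pow]
  · rw [MW.of_s_eq, MW.of_t_eq]; group
  · rw [MW.of_t_eq]

lemma mwToT_comp_tToMW : mwToT.comp tToMW = MonoidHom.id _ :=
  PresentedGroup.ext fun g ↦ by cases g <;> rfl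

/-- The group `⟨x₂, x₄, s, t ∣ tx₄x₂ = 1, x₂x₄t⁻¹x₂st = 1, x₂x₄²t⁻¹ = 1⟩` is isomorphic
to `⟨a, b ∣ a²b³ = 1⟩` via an isomorphism sending `x₂ ↦ a` and `x₄ ↦ b`. -/
theorem M_W_group_iso_a2b3_group :
    ∃ e : PresentedGroup relsMW ≃* PresentedGroup relsT,
      e (PresentedGroup.of GenMW.x₂) = PresentedGroup.of GenT.a ∧
      e (PresentedGroup.of GenMW.x₄) = PresentedGroup.of GenT.b :=
  ⟨mwToT.toMulEquiv tToMW tToMW_comp_mwToT mwToT_comp_tToMW, rfl, rfl⟩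
end
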